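/- arXiv:1801.06333 — 3 statements merged into one kernel-verified Lean document; each statement's English description precedes it below -/
import Mathlib

section
/- Let R₀ > 0, K ≥ 1, ξ > 0, g > 0, and set a_n = 2^{(K-n)R₀}(2^{R₀}-1)/(2^{K R₀}-1) for n = 1,…,K and A_n = ∑_{l=n+1}^K a_l. Then for every n with 1 ≤ n < K, the inequality log₂(1 + a_n ξ g / (1 + ξ g A_n)) > R₀ holds if and only if ξ g > 2^{K R₀} - 1. -/
open Finset Real

lemma geom_telescope (R₀ : ℝ) (n : ℕ) :
    ∀ m, n ≤ m → ∑ l ∈ Finset.Icc (n + 1) m, (2:ℝ) ^ (-(l:ℝ) * R₀) * ((2:ℝ) ^ R₀ - 1)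
      = (2:ℝ) ^ (-(n:ℝ) * R₀) - (2:ℝ) ^ (-(m:ℝ) * R₀) := by
  intro m hm
  induction m, hm using Nat.le_induction with
  | base => simp
  | succ m hm ih =>
    rw [Finset.sum_Icc_succ_top (by omega), ih]
    have h1 : (2:ℝ) ^ (-(((m:ℕ):ℝ) + 1) * R₀) * (2:ℝ) ^ R₀ = (2:ℝ) ^ (-(m:ℝ) * R₀) := by
      rw [← Real.rpow_add two_pos]; ring_nf
    push_cast
    nlinarith [h1]

/-- Under the equal-outage power allocation, for every user `n` with `1 ≤ n < K`, the NOMA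
non-outage condition `log₂(1 + aₙξg/(1 + ξg·Aₙ)) > R₀` holds iff `ξg > 2^(K·R₀) - 1`. -/
theorem noma_outage_iff_oma (R₀ : ℝ) (hR : 0 < R₀) (K : ℕ) (hK : 1 ≤ K)
    (ξ g : ℝ) (hξ : 0 < ξ) (hg : 0 < g)
    (a A : ℕ → ℝ)
    (ha : ∀ n, a n = (2 : ℝ) ^ (((K : ℝ) - n) * R₀) * ((2 : ℝ) ^ R₀ - 1) /
      ((2 : ℝ) ^ ((K : ℝ) * R₀) - 1))
    (hA : ∀ n, A n = ∑ l ∈ Finset.Icc (n + 1) K, a l)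
    (n : ℕ) (hn1 : 1 ≤ n) (hnK : n < K) :
    Real.logb 2 (1 + a n * ξ * g / (1 + ξ * g * A n)) > R₀ ↔
      ξ * g > (2 : ℝ) ^ ((K : ℝ) * R₀) - 1 := by
  set c : ℝ := (2:ℝ) ^ R₀ with hcdef
  set C : ℝ := (2:ℝ) ^ ((K:ℝ) * R₀) with hCdef
  set B : ℝ := (2:ℝ) ^ (((K:ℝ) - n) * R₀) with hBdef
  have hc1 : 1 < c := Real.one_lt_rpow_iff_of_pos two_pos |>.mpr (Or.inl ⟨one_lt_two, hR⟩)
  have hC1 : 1 < C := Real.one_lt_rpow_iff_of_pos two_pos |>.mpr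
    (Or.inl ⟨one_lt_two, by positivity⟩)
  have hKn : (0:ℝ) < (K:ℝ) - n := by
    have : (n:ℝ) < K := by exact_mod_cast hnK
    linarith
  have hB1 : 1 < B := Real.one_lt_rpow_iff_of_pos two_pos |>.mpr
    (Or.inl ⟨one_lt_two, by positivity⟩)
  have ht : 0 < ξ * g := mul_pos hξ hg
  set t := ξ * g with htdef
  -- compute A n
  have hsplit : ∀ l : ℕ, (2:ℝ) ^ (((K:ℝ) - l) * R₀) = C * (2:ℝ) ^ (-(l:ℝ) * R₀) := by
    intro l
    rw [hCdef, ← Real.rpow_add two_pos]; ring_nf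
  have hAn : A n = (B - 1) / (C - 1) := by
    rw [hA n]
    have : ∀ l ∈ Finset.Icc (n+1) K, a l
        = C / (C - 1) * ((2:ℝ) ^ (-(l:ℝ) * R₀) * (c - 1)) := by
      intro l _
      rw [ha l, hsplit l]; ring
    rw [Finset.sum_congr rfl this, ← Finset.mul_sum,
      geom_telescope R₀ n K (le_of_lt hnK)]
    have e1 : C * (2:ℝ) ^ (-(n:ℝ) * R₀) = B := by
      rw [hCdef, hBdef, ← Real.rpow_add two_pos]; ring_nf
    have e2 : C * (2:ℝ) ^ (-(K:ℝ) * R₀) = 1 := by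
      rw [hCdef, ← Real.rpow_add two_pos]
      norm_num
    rw [show C / (C - 1) * ((2:ℝ) ^ (-(n:ℝ) * R₀) - (2:ℝ) ^ (-(K:ℝ) * R₀))
      = (C * (2:ℝ) ^ (-(n:ℝ) * R₀) - C * (2:ℝ) ^ (-(K:ℝ) * R₀)) / (C - 1) by ring,
      e1, e2]
  have han : a n = B * (c - 1) / (C - 1) := by rw [ha n]
  have hC1' : (0:ℝ) < C - 1 := by linarith
  -- denominator
  have hD : 1 + t * A n = (C - 1 + t * (B - 1)) / (C - 1) := by
    rw [hAn]; field_simp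
  have hDpos : 0 < C - 1 + t * (B - 1) := by nlinarith
  have hx : 1 + a n * ξ * g / (1 + ξ * g * A n)
      = 1 + B * (c - 1) * t / (C - 1 + t * (B - 1)) := by
    rw [show a n * ξ * g = a n * t by rw [htdef]; ring, hD, han]
    field_simp
  have hxpos : (0:ℝ) < 1 + B * (c - 1) * t / (C - 1 + t * (B - 1)) := by
    have hnum : 0 < B * (c - 1) * t := by 
      have : 0 < c - 1 := by linarith
      positivity
    linarith [div_pos hnum hDpos]
  rw [hx, gt_iff_lt, Real.lt_logb_iff_rpow_lt one_lt_two hxpos, ← hcdef,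
    show (1 + B*(c-1)*t/(C-1+t*(B-1))) = ((C-1+t*(B-1)) + B*(c-1)*t)/(C-1+t*(B-1)) by
      field_simp,
    lt_div_iff₀ hDpos]
  constructor <;> intro h <;> nlinarith [mul_pos ht (sub_pos.mpr hc1), mul_pos ht (sub_pos.mpr hB1)]
end

section
/- Let R₀ > 0, K ≥ 1, ξ > 0, g > 0, and a_K = (2^{R₀}-1)/(2^{K R₀}-1). Then log₂(1 + a_K ξ g) > R₀ if and only if (1/K) log₂(1 + ξ g) > R₀. -/
open Real

/-- For user `K` with `a_K = (2^R₀-1)/(2^(K·R₀)-1)`: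
`log₂(1 + a_K ξ g) > R₀` iff `(1/K)·log₂(1 + ξ g) > R₀`. -/
theorem user_K_noma_iff_oma (R₀ : ℝ) (hR : 0 < R₀) (K : ℕ) (hK : 1 ≤ K)
    (ξ g : ℝ) (hξ : 0 < ξ) (hg : 0 < g)
    (aK : ℝ) (haK : aK = ((2 : ℝ) ^ R₀ - 1) / ((2 : ℝ) ^ ((K : ℝ) * R₀) - 1)) :
    Real.logb 2 (1 + aK * ξ * g) > R₀ ↔ (1 / (K : ℝ)) * Real.logb 2 (1 + ξ * g) > R₀ := by
  have hK0 : (0 : ℝ) < K := by exact_mod_cast Nat.lt_of_lt_of_le Nat.zero_lt_one hK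
  have hA : (1 : ℝ) < (2 : ℝ) ^ R₀ :=
    Real.one_lt_rpow_iff_of_pos (by norm_num) |>.mpr (Or.inl ⟨by norm_num, hR⟩)
  have hB : (1 : ℝ) < (2 : ℝ) ^ ((K : ℝ) * R₀) :=
    Real.one_lt_rpow_iff_of_pos (by norm_num) |>.mpr (Or.inl ⟨by norm_num, mul_pos hK0 hR⟩)
  have haKpos : 0 < aK := by rw [haK]; exact div_pos (by linarith) (by linarith)
  have hx1 : (0 : ℝ) < 1 + aK * ξ * g := by nlinarith [mul_pos (mul_pos haKpos hξ) hg]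
  have hx2 : (0 : ℝ) < 1 + ξ * g := by nlinarith [mul_pos hξ hg]
  rw [gt_iff_lt, gt_iff_lt,
    show (1 / (K : ℝ)) * Real.logb 2 (1 + ξ * g) = Real.logb 2 (1 + ξ * g) / K by ring,
    lt_div_iff₀ hK0,
    Real.lt_logb_iff_rpow_lt (by norm_num) hx1,
    Real.lt_logb_iff_rpow_lt (by norm_num) hx2, mul_comm R₀ (K : ℝ)]
  have key : aK * ξ * g = ((2 : ℝ) ^ R₀ - 1) * (ξ * g) / ((2 : ℝ) ^ ((K : ℝ) * R₀) - 1) := by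
    rw [haK]; ring
  constructor
  · intro h
    have h2 : (2 : ℝ) ^ ((K : ℝ) * R₀) - 1 < ξ * g := by
      have h3 : ((2 : ℝ) ^ R₀ - 1) * ((2 : ℝ) ^ ((K : ℝ) * R₀) - 1) <
          ((2 : ℝ) ^ R₀ - 1) * (ξ * g) := by
        rw [key] at h
        have := (lt_div_iff₀ (by linarith : (0:ℝ) < (2 : ℝ) ^ ((K : ℝ) * R₀) - 1)).mp
          (by linarith : (2 : ℝ) ^ R₀ - 1 < ((2 : ℝ) ^ R₀ - 1) * (ξ * g) / ((2 : ℝ) ^ ((K : ℝ) * R₀) - 1))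
        linarith
      exact lt_of_mul_lt_mul_left h3 (by linarith)
    linarith
  · intro h
    have h2 : (2 : ℝ) ^ ((K : ℝ) * R₀) - 1 < ξ * g := by linarith
    have h3 : (2 : ℝ) ^ R₀ - 1 < aK * ξ * g := by
      rw [key, lt_div_iff₀ (by linarith)]
      nlinarith
    linarith
end

section
/- Let R₀ > 0 and K ≥ 2. If coefficients satisfy A_n ≤ 2^{-R₀ n} for all n = 1,…,K−1 with a_n given by Lemma 1's allocation, then the channel-gain threshold for every decoding event B_n and B_{n→m} (m < n ≤ K) equals (2^{K R₀} − 1)/ξ; i.e., for all g > 0 and all m ≤ n, log₂(1 + a_m ξ g/(1 + A_m ξ g)) > R₀ ⟺ ξ g > 2^{K R₀} − 1. -/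
open Finset Real

/-! With `q = 2^R₀` and `D = q^K - 1`, the allocation is `a_l = q^(K-l) (q-1)/D`, and its tails
telescope geometrically to `A_m = (q^(K-m) - 1)/D`. Putting `x = ξ g`, the decoding condition
`2^R₀ < 1 + a_m x/(1 + A_m x)` then becomes `(q - 1) D < (q - 1) x`, independently of `m`. -/

theorem Finset.sum_Icc_pow_sub_mul_sub_one {R : Type*} [CommRing R] (q : R) {m K : ℕ}
    (hmK : m ≤ K) : ∑ l ∈ Icc (m + 1) K, q ^ (K - l) * (q - 1) = q ^ (K - m) - 1 := by
  have reflect : ∑ l ∈ Icc (m + 1) K, q ^ (K - l) = ∑ j ∈ range (K - m), q ^ j :=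
    sum_nbij' (K - ·) (K - ·) (fun l hl => by simp only [mem_Icc, mem_range] at hl ⊢; omega)
      (fun j hj => by simp only [mem_Icc, mem_range] at hj ⊢; omega)
      (fun l hl => by simp only [mem_Icc] at hl; omega)
      (fun j hj => by simp only [mem_range] at hj; omega) (fun _ _ => rfl)
  rw [← sum_mul, reflect, geom_sum_mul]

theorem Real.rpow_natCast_sub_mul {b : ℝ} (hb : 0 ≤ b) (r : ℝ) {l K : ℕ} (hlK : l ≤ K) :
    b ^ (((K : ℝ) - l) * r) = (b ^ r) ^ (K - l) := by
  rw [← Nat.cast_sub hlK, mul_comm, rpow_mul_natCast hb]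

theorem lt_one_add_div_iff {q s D x : ℝ} (hq : 1 < q) (hs : 1 ≤ s) (hD : 0 < D) (hx : 0 < x) :
    q < 1 + s * (q - 1) / D * x / (1 + (s - 1) / D * x) ↔ D < x := by
  have hden : 0 < 1 + (s - 1) / D * x := by
    have : 0 ≤ (s - 1) / D * x := mul_nonneg (div_nonneg (sub_nonneg.2 hs) hD.le) hx.le
    linarith
  have excess : s * (q - 1) / D * x - (q - 1) * (1 + (s - 1) / D * x) = (q - 1) / D * (x - D) := by
    field_simp
    ring
  rw [← sub_lt_iff_lt_add', lt_div_iff₀ hden, ← sub_pos, excess,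
    mul_pos_iff_of_pos_left (div_pos (sub_pos.2 hq) hD), sub_pos]

theorem lt_logb_one_add_div_iff {r s D x : ℝ} (hr : 0 < r) (hs : 1 ≤ s) (hD : 0 < D)
    (hx : 0 < x) :
    r < logb 2 (1 + s * (2 ^ r - 1) / D * x / (1 + (s - 1) / D * x)) ↔ D < x := by
  have hq : (1 : ℝ) < 2 ^ r := one_lt_rpow one_lt_two hr
  have hsinr : 0 ≤ s * (2 ^ r - 1) / D * x / (1 + (s - 1) / D * x) := by
    have : 0 ≤ (s - 1) / D * x := mul_nonneg (div_nonneg (sub_nonneg.2 hs) hD.le) hx.le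
    refine div_nonneg (mul_nonneg (div_nonneg (mul_nonneg ?_ ?_) hD.le) hx.le) ?_ <;> linarith
  rw [lt_logb_iff_rpow_lt one_lt_two (by linarith)]
  exact lt_one_add_div_iff hq hs hD hx

theorem common_decoding_threshold_general (R₀ : ℝ) (hR : 0 < R₀) (K : ℕ)
    (ξ : ℝ) (hξ : 0 < ξ)
    (a A : ℕ → ℝ)
    (ha : ∀ n, a n = (2 : ℝ) ^ (((K : ℝ) - n) * R₀) * ((2 : ℝ) ^ R₀ - 1) /
      ((2 : ℝ) ^ ((K : ℝ) * R₀) - 1))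
    (hA : ∀ n, A n = ∑ l ∈ Finset.Icc (n + 1) K, a l) :
    ∀ g : ℝ, 0 < g → ∀ m n : ℕ, 1 ≤ m → m ≤ n → n ≤ K →
      (Real.logb 2 (1 + a m * ξ * g / (1 + A m * ξ * g)) > R₀ ↔
        ξ * g > (2 : ℝ) ^ ((K : ℝ) * R₀) - 1) := by
  intro g hg m n hm hmn hnK
  have hmK : m ≤ K := hmn.trans hnK
  have hq : (1 : ℝ) < 2 ^ R₀ := one_lt_rpow one_lt_two hR
  have hKR : (2 : ℝ) ^ ((K : ℝ) * R₀) = (2 ^ R₀) ^ K := by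
    rw [mul_comm, rpow_mul_natCast zero_le_two]
  have hD : 0 < ((2 : ℝ) ^ R₀) ^ K - 1 := sub_pos.2 (one_lt_pow₀ hq (by omega))
  have ha' : ∀ l ≤ K, a l = (2 ^ R₀) ^ (K - l) * (2 ^ R₀ - 1) / ((2 ^ R₀) ^ K - 1) := by
    intro l hlK
    rw [ha, rpow_natCast_sub_mul zero_le_two R₀ hlK, hKR]
  have hAm : A m = ((2 ^ R₀) ^ (K - m) - 1) / ((2 ^ R₀) ^ K - 1) := by
    rw [hA, ← sum_Icc_pow_sub_mul_sub_one _ hmK, sum_div]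
    exact sum_congr rfl fun l hl => ha' l (mem_Icc.1 hl).2
  rw [mul_assoc, mul_assoc, ha' m hmK, hAm, hKR, gt_iff_lt, gt_iff_lt]
  exact lt_logb_one_add_div_iff hR (one_le_pow₀ hq.le) hD (mul_pos hξ hg)

/-- Under the equal-outage allocation, every decoding event `B_n` and `B_{n→m}` (`m ≤ n ≤ K`)
reduces to the same channel-gain threshold: for all `g > 0`,
`log₂(1 + a_m ξ g/(1 + A_m ξ g)) > R₀ ↔ ξ g > 2^(K R₀) - 1`. -/
theorem common_decoding_threshold (R₀ : ℝ) (hR : 0 < R₀) (K : ℕ) (hK : 2 ≤ K)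
    (ξ : ℝ) (hξ : 0 < ξ)
    (a A : ℕ → ℝ)
    (ha : ∀ n, a n = (2 : ℝ) ^ (((K : ℝ) - n) * R₀) * ((2 : ℝ) ^ R₀ - 1) /
      ((2 : ℝ) ^ ((K : ℝ) * R₀) - 1))
    (hA : ∀ n, A n = ∑ l ∈ Finset.Icc (n + 1) K, a l)
    (hlim : ∀ n, 1 ≤ n → n ≤ K - 1 → A n ≤ (2 : ℝ) ^ (-R₀ * (n : ℝ))) :
    ∀ g : ℝ, 0 < g → ∀ m n : ℕ, 1 ≤ m → m ≤ n → n ≤ K →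
      (Real.logb 2 (1 + a m * ξ * g / (1 + A m * ξ * g)) > R₀ ↔
        ξ * g > (2 : ℝ) ^ ((K : ℝ) * R₀) - 1) :=
  common_decoding_threshold_general R₀ hR K ξ hξ a A ha hA
end
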